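/- arXiv:1804.01007 — 3 statements merged into one kernel-verified Lean document; each statement's English description precedes it below -/
import Mathlib

section
/- The function h(z) = (6z² − 6z + 1)(log z − log(1−z) − 3) − 6z + 3 satisfies the confluent Heun equation h''(z) + (1/z + 1/(z−1))h'(z) + (−6)/(z(z−1)) · h(z) = 0 for all z in the real interval (0,1). -/
/-!
Write `h = P · L + R` with `P = 6z² − 6z + 1`, `L = log z − log (1 − z) − 3`, `R = 3 − 6z`.
Since `L' = 1/(z(1 − z))` is rational, `L` appears in `h'` and `h''` only as `P' L` and `P'' L`,
so the coefficient of `L` in the equation is `z(1 − z)P'' + (1 − 2z)P' + 6P = 0` (Legendre's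
equation, solved by the shifted Legendre polynomial `P`); what remains is a rational identity.
-/

open Real Topology

namespace Heun

noncomputable def sol (w : ℝ) : ℝ := (6*w^2 - 6*w + 1) * (log w - log (1-w) - 3) - 6*w + 3

noncomputable def solDeriv (w : ℝ) : ℝ :=
  (12*w - 6) * (log w - log (1-w) - 3) + 1 / (w * (1-w)) - 12

variable {z : ℝ}

theorem hasDerivAt_log_sub_log_one_sub (hz₀ : z ≠ 0) (hz₁ : z ≠ 1) :
    HasDerivAt (fun w => log w - log (1-w)) (1 / (z * (1-z))) z := by
  have h₁ : 1 - z ≠ 0 := sub_ne_zero.mpr hz₁.symm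
  refine ((((hasDerivAt_id' z).log hz₀).fun_sub
    (((hasDerivAt_id' z).const_sub 1).log h₁))).congr_deriv ?_
  field_simp
  ring

theorem hasDerivAt_one_div_mul_one_sub (hz₀ : z ≠ 0) (hz₁ : z ≠ 1) :
    HasDerivAt (fun w => 1 / (w * (1-w))) (-(1 - 2*z) / (z * (1-z))^2) z := by
  have hden₀ : z * (1-z) ≠ 0 := mul_ne_zero hz₀ (sub_ne_zero.mpr hz₁.symm)
  refine ((hasDerivAt_const z 1).fun_div
    ((hasDerivAt_id' z).fun_mul ((hasDerivAt_id' z).const_sub 1)) hden₀).congr_deriv ?_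
  ring

theorem hasDerivAt_sol (hz₀ : z ≠ 0) (hz₁ : z ≠ 1) : HasDerivAt sol (solDeriv z) z := by
  have hP : HasDerivAt (fun w : ℝ => 6*w^2 - 6*w + 1) (12*z - 6) z :=
    (((hasDerivAt_id' z).pow 2).const_mul 6).fun_sub ((hasDerivAt_id' z).const_mul 6)
      |>.add_const 1 |>.congr_deriv (by ring)
  refine ((hP.fun_mul ((hasDerivAt_log_sub_log_one_sub hz₀ hz₁).sub_const 3)).fun_sub
    ((hasDerivAt_id' z).const_mul 6)).add_const 3 |>.congr_deriv ?_
  simp only [solDeriv]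
  field_simp
  ring

theorem hasDerivAt_solDeriv (hz₀ : z ≠ 0) (hz₁ : z ≠ 1) :
    HasDerivAt solDeriv
      (12 * (log z - log (1-z) - 3) + (12*z - 6) / (z * (1-z)) - (1 - 2*z) / (z * (1-z))^2) z := by
  have hQ : HasDerivAt (fun w : ℝ => 12*w - 6) 12 z :=
    ((hasDerivAt_id' z).const_mul 12).sub_const 6 |>.congr_deriv (by ring)
  refine ((hQ.fun_mul ((hasDerivAt_log_sub_log_one_sub hz₀ hz₁).sub_const 3)).fun_add
    (hasDerivAt_one_div_mul_one_sub hz₀ hz₁)).sub_const 12 |>.congr_deriv ?_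
  ring

theorem deriv_sol_eventuallyEq (hz₀ : z ≠ 0) (hz₁ : z ≠ 1) : deriv sol =ᶠ[𝓝 z] solDeriv := by
  filter_upwards [isOpen_ne.mem_nhds hz₀, isOpen_ne.mem_nhds hz₁] with w hw₀ hw₁
  exact (hasDerivAt_sol hw₀ hw₁).deriv

end Heun

open Heun in
/-- h(z) = (6z² − 6z + 1)(log z − log(1−z) − 3) − 6z + 3 satisfies the
confluent Heun equation h'' + (1/z + 1/(z−1)) h' − 6/(z(z−1)) h = 0 on (0,1). -/
theorem stmt_3 : ∀ z ∈ Set.Ioo (0:ℝ) 1,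
    deriv (deriv (fun w : ℝ =>
        (6*w^2 - 6*w + 1) * (Real.log w - Real.log (1-w) - 3) - 6*w + 3)) z
      + ((1:ℝ)/z + (1:ℝ)/(z-1)) * deriv (fun w : ℝ =>
        (6*w^2 - 6*w + 1) * (Real.log w - Real.log (1-w) - 3) - 6*w + 3) z
      + ((-6)/(z*(z-1))) *
        ((6*z^2 - 6*z + 1) * (Real.log z - Real.log (1-z) - 3) - 6*z + 3) = 0 := by
  rintro z ⟨hz_pos, hz_lt_one⟩
  have hz₀ : z ≠ 0 := hz_pos.ne'
  have hz₁ : z ≠ 1 := hz_lt_one.ne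
  change deriv (deriv sol) z + (1/z + 1/(z-1)) * deriv sol z + (-6)/(z*(z-1)) * sol z = 0
  rw [(deriv_sol_eventuallyEq hz₀ hz₁).deriv_eq, (hasDerivAt_solDeriv hz₀ hz₁).deriv,
    (hasDerivAt_sol hz₀ hz₁).deriv]
  simp only [sol, solDeriv]
  field_simp
  ring
end

section
/- The function h(z) = cos(log(√(1−z) + i√z)) satisfies the confluent Heun equation h''(z) + ((1/2)/z + (1/2)/(z−1))h'(z) + (1/4)/(z(z−1)) · h(z) = 0 for all z in the real interval (0,1). -/
/-!
For `0 ≤ z ≤ 1` we have `√(1 - z) + i √z = exp (i θ)` with `θ = arcsin √z ∈ [-π/2, π/2]`, so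
`L = log (√(1 - z) + i √z) = i θ` and `L' = i / (2 √(z (1 - z)))`. For `h = cos ∘ L`,
`h'' + p h' + q h = -cos L · (L'² - q) - sin L · (L'' + p L')`, and both brackets vanish for the
Heun coefficients `p = 1/(2z) + 1/(2(z - 1))`, `q = 1/(4 z (z - 1))`.
-/

open Complex Filter Topology

theorem deriv_deriv_cos_comp_add_mul_deriv_add_mul_eq_zero {L ℓ : ℝ → ℂ} {ℓ' p q : ℂ} {z : ℝ}
    (hL : ∀ᶠ w in 𝓝 z, HasDerivAt L (ℓ w) w) (hℓ : HasDerivAt ℓ ℓ' z)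
    (hq : ℓ z ^ 2 = q) (hp : ℓ' = -p * ℓ z) :
    deriv (deriv fun w => cos (L w)) z + p * deriv (fun w => cos (L w)) z
      + q * cos (L z) = 0 := by
  have hcos : ∀ᶠ w in 𝓝 z, HasDerivAt (fun w => cos (L w)) (-sin (L w) * ℓ w) w :=
    hL.mono fun w hw => (hasDerivAt_cos (L w)).comp w hw
  have hsin : HasDerivAt (fun w => -sin (L w) * ℓ w)
      (-(cos (L z) * ℓ z) * ℓ z + -sin (L z) * ℓ') z :=
    ((hasDerivAt_sin (L z)).comp z hL.self_of_nhds).neg.mul hℓ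
  rw [hcos.self_of_nhds.deriv,
    (hsin.congr_of_eventuallyEq (hcos.mono fun w hw => hw.deriv)).deriv]
  linear_combination (-cos (L z)) * hq - sin (L z) * hp

theorem log_sqrt_one_sub_add_I_mul_sqrt {w : ℝ} (h₀ : 0 ≤ w) (h₁ : w ≤ 1) :
    log (√(1 - w) + I * √w) = Real.arcsin √w * I := by
  have hsin : Real.sin (Real.arcsin √w) = √w :=
    Real.sin_arcsin (by linarith [Real.sqrt_nonneg w]) (Real.sqrt_le_one.mpr h₁)
  have hcos : Real.cos (Real.arcsin √w) = √(1 - w) := by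
    rw [Real.cos_arcsin, Real.sq_sqrt h₀]
  have hexp : cexp (Real.arcsin √w * I) = √(1 - w) + I * √w := by
    rw [exp_mul_I, ← ofReal_cos, ← ofReal_sin, hcos, hsin, mul_comm]
  rw [← hexp, log_exp] <;> simp only [mul_I_im, ofReal_re]
  · linarith [Real.neg_pi_div_two_le_arcsin √w, Real.pi_pos]
  · linarith [Real.arcsin_le_pi_div_two √w, Real.pi_pos]

theorem hasDerivAt_arcsin_sqrt {w : ℝ} (h₀ : 0 < w) (h₁ : w < 1) :
    HasDerivAt (fun x => Real.arcsin √x) (2 * √(w * (1 - w)))⁻¹ w := by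
  have h := (Real.hasDerivAt_arcsin (x := √w) (by linarith [Real.sqrt_nonneg w])
    (by simpa using h₁.ne)).comp w (Real.hasDerivAt_sqrt h₀.ne')
  refine h.congr_deriv ?_
  rw [Real.sq_sqrt h₀.le, Real.sqrt_mul h₀.le]
  field_simp

theorem hasDerivAt_log_sqrt_one_sub_add_I_mul_sqrt {w : ℝ} (h₀ : 0 < w) (h₁ : w < 1) :
    HasDerivAt (fun x : ℝ => log (√(1 - x) + I * √x)) (((2 * √(w * (1 - w)))⁻¹ : ℝ) * I) w :=
  ((hasDerivAt_arcsin_sqrt h₀ h₁).ofReal_comp.mul_const I).congr_of_eventuallyEq <| by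
    filter_upwards [Icc_mem_nhds h₀ h₁] with x hx
    exact log_sqrt_one_sub_add_I_mul_sqrt hx.1 hx.2

theorem hasDerivAt_inv_two_mul_sqrt_mul_one_sub {w : ℝ} (h₀ : 0 < w) (h₁ : w < 1) :
    HasDerivAt (fun x => (2 * √(x * (1 - x)))⁻¹)
      (-(1 / 2 / w + 1 / 2 / (w - 1)) * (2 * √(w * (1 - w)))⁻¹) w := by
  have hu : 0 < w * (1 - w) := mul_pos h₀ (by linarith)
  have hpoly : HasDerivAt (fun x => x * (1 - x)) (1 - 2 * w) w :=
    ((hasDerivAt_id' w).mul ((hasDerivAt_id' w).const_sub 1)).congr_deriv (by ring)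
  have h := (((Real.hasDerivAt_sqrt hu.ne').comp w hpoly).const_mul 2).inv
    (by simp only [Function.comp]; positivity)
  simp only [Function.comp_apply] at h
  refine h.congr_deriv ?_
  have hs := Real.sq_sqrt hu.le
  have hw₁ : w - 1 ≠ 0 := by linarith
  field_simp
  rw [hs]
  field_simp
  ring

/-- h(z) = cos(log(√(1−z) + i√z)) (principal branches) satisfies the
confluent Heun equation h'' + ((1/2)/z + (1/2)/(z−1)) h' + (1/4)/(z(z−1)) h = 0
on the real interval (0,1). -/
theorem stmt_7 : ∀ z ∈ Set.Ioo (0:ℝ) 1,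
    deriv (deriv (fun w : ℝ => Complex.cos (Complex.log
        ((Real.sqrt (1-w) : ℂ) + Complex.I * (Real.sqrt w : ℂ))))) z
      + ((((1:ℂ)/2)/(z:ℂ) + ((1:ℂ)/2)/((z:ℂ)-1)) : ℂ) *
          deriv (fun w : ℝ => Complex.cos (Complex.log
            ((Real.sqrt (1-w) : ℂ) + Complex.I * (Real.sqrt w : ℂ)))) z
      + (((1:ℂ)/4)/((z:ℂ)*((z:ℂ)-1))) *
          Complex.cos (Complex.log
            ((Real.sqrt (1-z) : ℂ) + Complex.I * (Real.sqrt z : ℂ))) = 0 := by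
  rintro z ⟨h₀, h₁⟩
  refine deriv_deriv_cos_comp_add_mul_deriv_add_mul_eq_zero
    (ℓ := fun w => ((2 * √(w * (1 - w)))⁻¹ : ℝ) * I) ?_
    ((hasDerivAt_inv_two_mul_sqrt_mul_one_sub h₀ h₁).ofReal_comp.mul_const I) ?_ ?_
  · filter_upwards [Ioo_mem_nhds h₀ h₁] with w hw
    exact hasDerivAt_log_sqrt_one_sub_add_I_mul_sqrt hw.1 hw.2
  · have hs : ((√(z * (1 - z)) : ℝ) : ℂ) ^ 2 = -(z * (z - 1)) := by
      rw [← ofReal_pow, Real.sq_sqrt (mul_pos h₀ (by linarith)).le]; push_cast; ring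
    have hz₀ : (z : ℂ) ≠ 0 := ofReal_ne_zero.mpr h₀.ne'
    have hz₁ : (z : ℂ) - 1 ≠ 0 := by exact_mod_cast sub_ne_zero.mpr h₁.ne
    push_cast
    rw [mul_pow, inv_pow, mul_pow, hs, I_sq]
    field_simp
    ring
  · push_cast
    ring
end

section
/- For any complex parameters q, α, γ, δ, ε with γ ∉ {0, −1, −2, ...}, the formal power series Σ bₙ zⁿ with coefficients defined by b₋₁ = 0, b₀ = 1 and n(γ−1+n)bₙ = (−q + (n−1)(γ+δ−ε+n−2))bₙ₋₁ + ((n−2)ε + α)bₙ₋₂ has radius of convergence at least 1; equivalently, for every r < 1 the sequence |bₙ|·rⁿ tends to 0. -/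
/-!
Dividing the recurrence by its leading coefficient `n(γ - 1 + n)` gives
`b(n) = u(n) b(n-1) + v(n) b(n-2)` with `u(n) → 1` and `v(n) → 0`. Hence for every `s > 1`,
eventually `|b(n)| ≤ s · max(|b(n-1)|, |b(n-2)|)`, so `|b(n)| = O(sⁿ)`; choosing `1 < s < 1/r`
gives `|b(n)| rⁿ → 0`.
-/

open Filter Topology Asymptotics

theorem isBigO_pow_of_le_mul_max {a : ℕ → ℝ} {s : ℝ} (ha : 0 ≤ a) (hs : 1 ≤ s)
    (h : ∀ᶠ n in atTop, a (n + 2) ≤ s * max (a (n + 1)) (a n)) :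
    a =O[atTop] (s ^ ·) := by
  obtain ⟨N, hN⟩ := eventually_atTop.1 h
  set M := max (a N) (a (N + 1))
  have hM : ∀ m, max (a (N + m)) (a (N + m + 1)) ≤ M * s ^ m := by
    intro m
    induction m with
    | zero => simp [M]
    | succ m ih =>
      have hMs : 0 ≤ M * s ^ m := (ha _).trans ((le_max_left _ _).trans ih)
      have hnext : a (N + m + 2) ≤ s * max (a (N + m + 1)) (a (N + m)) :=
        hN (N + m) (Nat.le_add_right _ _)
      rw [max_comm] at ih
      show max (a (N + m + 1)) (a (N + m + 2)) ≤ M * s ^ (m + 1)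
      rw [pow_succ, ← mul_assoc, max_le_iff]
      exact ⟨(le_max_left _ _).trans (ih.trans (le_mul_of_one_le_right hMs hs)),
        hnext.trans (by rw [mul_comm]; gcongr)⟩
  have hs0 : 0 < s ^ N := pow_pos (by linarith) N
  refine IsBigO.of_bound (M / s ^ N) (eventually_atTop.2 ⟨N, fun n hn => ?_⟩)
  obtain ⟨m, rfl⟩ := Nat.exists_eq_add_of_le hn
  have hscale : M / s ^ N * s ^ (N + m) = M * s ^ m := by
    rw [pow_add]; field_simp
  rw [Real.norm_of_nonneg (ha _), Real.norm_of_nonneg (pow_nonneg (by linarith) _), hscale]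
  exact (le_max_left _ _).trans (hM m)

theorem isBigO_pow_of_linear_recurrence {𝕜 E : Type*} [NormedField 𝕜] [NormedAddCommGroup E]
    [NormedSpace 𝕜 E] {c : ℕ → E} {u v : ℕ → 𝕜} {A B : 𝕜} {s : ℝ}
    (hrec : ∀ᶠ n in atTop, c (n + 2) = u n • c (n + 1) + v n • c n)
    (hu : Tendsto u atTop (𝓝 A)) (hv : Tendsto v atTop (𝓝 B))
    (hs : ‖A‖ + ‖B‖ < s) (hs1 : 1 ≤ s) :
    (fun n => ‖c n‖) =O[atTop] (s ^ ·) := by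
  have hlim : Tendsto (fun n => ‖u n‖ + ‖v n‖) atTop (𝓝 (‖A‖ + ‖B‖)) := hu.norm.add hv.norm
  refine isBigO_pow_of_le_mul_max (fun n => norm_nonneg _) hs1 ?_
  filter_upwards [hrec, hlim.eventually (eventually_le_nhds hs)] with n hn hcoef
  have hmax : 0 ≤ max ‖c (n + 1)‖ ‖c n‖ := le_max_of_le_left (norm_nonneg _)
  calc ‖c (n + 2)‖ ≤ ‖u n‖ * ‖c (n + 1)‖ + ‖v n‖ * ‖c n‖ := by
        rw [hn, ← norm_smul, ← norm_smul]; exact norm_add_le _ _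
    _ ≤ (‖u n‖ + ‖v n‖) * max ‖c (n + 1)‖ ‖c n‖ := by
        rw [add_mul]; gcongr
        exacts [le_max_left _ _, le_max_right _ _]
    _ ≤ s * max ‖c (n + 1)‖ ‖c n‖ := by gcongr

theorem tendsto_quadratic_div_monic_quadratic {𝕜 : Type*} [RCLike 𝕜]
    (e a b c d : 𝕜) :
    Tendsto (fun n : ℕ => (e * n ^ 2 + a * n + b) / (n ^ 2 + c * n + d)) atTop (𝓝 e) := by
  have hx : Tendsto (fun n : ℕ => (n : 𝕜)⁻¹) atTop (𝓝 0) := tendsto_inv_atTop_nhds_zero_nat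
  have hlim := (((hx.const_mul a).const_add e).add ((hx.pow 2).const_mul b)).div
    (((hx.const_mul c).const_add 1).add ((hx.pow 2).const_mul d)) (by simp)
  simp only [mul_zero, add_zero, ne_eq, OfNat.ofNat_ne_zero, not_false_eq_true, zero_pow,
    div_one] at hlim
  refine hlim.congr' (eventually_atTop.2 ⟨1, fun n hn => ?_⟩)
  have hn : (n : 𝕜) ≠ 0 := Nat.cast_ne_zero.2 (by omega)
  simp only [Pi.div_apply]
  field_simp

theorem stmt_15_general (q α γ δ ε : ℂ) (hγ : ∀ k : ℕ, γ ≠ -(k:ℂ))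
    (b : ℤ → ℂ)
    (hrec : ∀ n : ℤ, 1 ≤ n →
      (n:ℂ)*(γ - 1 + n) * b n
        = (-q + ((n:ℂ)-1)*(γ+δ-ε+n-2)) * b (n-1) + (((n:ℂ)-2)*ε + α) * b (n-2)) :
    ∀ r : ℝ, 0 ≤ r → r < 1 →
      Filter.Tendsto (fun n : ℕ => ‖b n‖ * r^n) Filter.atTop (nhds 0) := by
  intro r hr0 hr1
  obtain ⟨s, hs1, hrs⟩ : ∃ s : ℝ, 1 < s ∧ r * s < 1 :=
    ⟨2 / (1 + r), by rw [lt_div_iff₀]; all_goals linarith,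
      by rw [← mul_div_assoc, div_lt_one]; all_goals linarith⟩
  have hD : ∀ n : ℕ, ((n + 2) * (γ + 1 + n) : ℂ) ≠ 0 := fun n =>
    mul_ne_zero (by norm_cast) fun h => hγ (n + 1) (by push_cast; linear_combination h)
  have hstep : ∀ n : ℕ, b (n + 2 : ℕ) =
      (-q + (n + 1) * (γ + δ - ε + n)) / ((n + 2) * (γ + 1 + n)) * b (n + 1 : ℕ)
        + (n * ε + α) / ((n + 2) * (γ + 1 + n)) * b n := by
    intro n
    have h := hrec (n + 2) (by omega)
    rw [show (n : ℤ) + 2 - 1 = n + 1 by ring, show (n : ℤ) + 2 - 2 = n by ring] at h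
    rw [div_mul_eq_mul_div, div_mul_eq_mul_div, ← add_div, eq_div_iff (hD n)]
    push_cast at h ⊢
    linear_combination h
  have hu : Tendsto (fun n : ℕ => (-q + (n + 1) * (γ + δ - ε + n)) / ((n + 2) * (γ + 1 + n)))
      atTop (𝓝 1) :=
    (tendsto_quadratic_div_monic_quadratic 1 (γ + δ - ε + 1) (γ + δ - ε - q) (γ + 3)
      (2 * (γ + 1))).congr fun n => by ring
  have hv : Tendsto (fun n : ℕ => (n * ε + α) / ((n + 2) * (γ + 1 + n))) atTop (𝓝 0) :=
    (tendsto_quadratic_div_monic_quadratic 0 ε α (γ + 3) (2 * (γ + 1))).congr fun n => by ring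
  have hO := isBigO_pow_of_linear_recurrence (c := fun n : ℕ => b n)
    (Eventually.of_forall hstep) hu hv (by simpa using hs1) hs1.le
  refine (hO.mul (isBigO_refl (r ^ ·) _)).trans_tendsto ?_
  simpa only [← mul_pow, mul_comm] using tendsto_pow_atTop_nhds_zero_of_lt_one (by positivity) hrs

/-- the Taylor coefficients of HeunC_l defined by the three-term
recurrence (γ not a nonpositive integer) give a power series of radius of
convergence at least 1: for every 0 ≤ r < 1, |bₙ| rⁿ → 0. -/
theorem stmt_15 (q α γ δ ε : ℂ) (hγ : ∀ k : ℕ, γ ≠ -(k:ℂ))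
    (b : ℤ → ℂ) (hbm : b (-1) = 0) (hb0 : b 0 = 1)
    (hrec : ∀ n : ℤ, 1 ≤ n →
      (n:ℂ)*(γ - 1 + n) * b n
        = (-q + ((n:ℂ)-1)*(γ+δ-ε+n-2)) * b (n-1) + (((n:ℂ)-2)*ε + α) * b (n-2)) :
    ∀ r : ℝ, 0 ≤ r → r < 1 →
      Filter.Tendsto (fun n : ℕ => ‖b n‖ * r^n) Filter.atTop (nhds 0) :=
  stmt_15_general q α γ δ ε hγ b hrec
end
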